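/- arXiv:1510.07179 — 5 statements merged into one kernel-verified Lean document; each statement's English description precedes it below -/
import Mathlib

section
/- For every convex body K in R^d there exist ellipsoids E1 ⊆ K ⊆ E2 such that Vol(E2)/Vol(E1) ≤ C_d, where C_d = d^d depends only on d. -/
/-!
Among the affine images `x ↦ T x + v` of the unit ball contained in `K`, compactness provides one
maximizing `|det T|`; pulling back by it, we may assume that this image is the unit ball `B`
itself. If `K` contained a point `q = s • e` with `‖e‖ = 1` and `s > d`, then the map that
stretches `B` by `1 + m (s - 1)` along `e`, shrinks it by `√(1 - 2m)` orthogonally to `e` and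
shifts it by `m (s - 1) • e` sends `B` into the convex hull of `B ∪ {q}`, hence into `K`; for
small `m > 0` its determinant `(1 + m (s - 1)) (1 - 2m) ^ ((d - 1) / 2)` exceeds `1`,
contradicting maximality. So `K ⊆ v + d • T(B)`, an ellipsoid of volume `d ^ d` times that of
`v + T(B)`.
-/

open Metric MeasureTheory Set

def IsEllipsoid {d : ℕ} (E : Set (EuclideanSpace ℝ (Fin d))) : Prop :=
  ∃ (L : EuclideanSpace ℝ (Fin d) ≃ₗ[ℝ] EuclideanSpace ℝ (Fin d))
    (v : EuclideanSpace ℝ (Fin d)),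
    E = (fun x => L x + v) '' closedBall 0 1

open Module
open scoped RealInnerProductSpace Pointwise

theorem exists_one_lt_mul_pow_of_add_one_lt {k : ℕ} {s : ℝ} (hs : (k + 1 : ℝ) < s) :
    ∃ m b : ℝ, 0 ≤ m ∧ b ^ 2 = 1 - 2 * m ∧ 1 < (1 + m * (s - 1)) * b ^ k := by
  -- `m` is small enough that `2 k m (s - 1) < s - (k + 1)`, which makes the Bernoulli lower bound
  -- `(1 + 2 m (s - 1)) (1 - 2 k m)` for the square exceed `1`.
  set m := (s - (k + 1)) / (4 * s * (k + 1))
  have hk : (0 : ℝ) ≤ k := k.cast_nonneg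
  have hs0 : 0 < s := by linarith
  have hm0 : 0 < m := by positivity
  have hm : 4 * m * s * (k + 1) = s - (k + 1) := by simp only [m]; field_simp
  have hkm : 2 * k * m * (s - 1) < s - (k + 1) := by nlinarith [mul_pos hm0 hs0]
  have hm4 : 4 * m < 1 := by
    nlinarith [mul_pos hs0 (by positivity : (0 : ℝ) < k + 1), mul_nonneg hs0.le hk]
  have hb : 0 < 1 - 2 * m := by linarith
  refine ⟨m, √(1 - 2 * m), hm0.le, Real.sq_sqrt hb.le, ?_⟩
  have bernoulli : 1 - 2 * k * m ≤ (1 - 2 * m) ^ k := by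
    simpa [mul_comm, sub_eq_add_neg, mul_assoc] using
      one_add_mul_le_pow (by linarith : (-2 : ℝ) ≤ -(2 * m)) k
  have hsq : 1 < ((1 + m * (s - 1)) * √(1 - 2 * m) ^ k) ^ 2 :=
    calc 1 < (1 + 2 * m * (s - 1)) * (1 - 2 * k * m) := by nlinarith
      _ ≤ (1 + m * (s - 1)) ^ 2 * (1 - 2 * m) ^ k := by
        gcongr
        · nlinarith
        · nlinarith [sq_nonneg (m * (s - 1))]
      _ = ((1 + m * (s - 1)) * √(1 - 2 * m) ^ k) ^ 2 := by
        rw [mul_pow, ← pow_mul, mul_comm k, pow_mul, Real.sq_sqrt hb.le]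
  have hpos : 0 < (1 + m * (s - 1)) * √(1 - 2 * m) ^ k := by
    have : 0 < √(1 - 2 * m) := Real.sqrt_pos.2 hb
    have : 0 < 1 + m * (s - 1) := by nlinarith
    positivity
  nlinarith

theorem Convex.mem_of_norm_sub_smul_le {E : Type*} [NormedAddCommGroup E] [NormedSpace ℝ E]
    {C : Set E} (hC : Convex ℝ C) (hball : closedBall 0 1 ⊆ C) {q y : E} (hq : q ∈ C) {μ : ℝ}
    (hμ₀ : 0 ≤ μ) (hμ₁ : μ ≤ 1) (hy : ‖y - μ • q‖ ≤ 1 - μ) : y ∈ C := by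
  obtain ⟨z, hz, hzy⟩ : y - μ • q ∈ (1 - μ) • closedBall (0 : E) 1 := by
    rw [smul_unitClosedBall_of_nonneg (by linarith)]
    simpa using hy
  have hzy : (1 - μ) • z = y - μ • q := hzy
  rw [show y = μ • q + (1 - μ) • z by rw [hzy]; abel]
  exact hC hq (hball hz) hμ₀ (by linarith) (by ring)

section InnerProductSpace

variable {E : Type*} [NormedAddCommGroup E] [InnerProductSpace ℝ E]

theorem Convex.mapsTo_closedBall_of_smul_mem {C : Set E} (hC : Convex ℝ C)
    (hball : closedBall 0 1 ⊆ C) {e : E} (he : ‖e‖ = 1) {s : ℝ} (hq : s • e ∈ C) {m b : ℝ}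
    (hm : 0 ≤ m) (hb : b ^ 2 = 1 - 2 * m) :
    MapsTo (fun x => ((1 + m * (s - 1)) • (ℝ ∙ e).starProjection +
      b • (ℝ ∙ e)ᗮ.starProjection) x + (m * (s - 1)) • e) (closedBall 0 1) C := by
  intro x hx
  rw [mem_closedBall_zero_iff] at hx
  set t := ⟪e, x⟫
  have ht : |t| ≤ 1 := by
    simpa [he] using (abs_real_inner_le_norm e x).trans (by rwa [he, one_mul])
  obtain ⟨ht₀, ht₁⟩ := abs_le.1 ht
  have hmb : 2 * m ≤ 1 := by nlinarith [sq_nonneg b]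
  set w := x - t • e
  have hew : ⟪e, w⟫ = 0 := by simp [w, t, inner_sub_right, real_inner_smul_right, he]
  have hx2 : t ^ 2 + ‖w‖ ^ 2 ≤ 1 := by
    have := norm_add_sq_real (t • e) w
    rw [show t • e + w = x by simp [w], real_inner_smul_left, hew, norm_smul, he,
      Real.norm_eq_abs, mul_one, sq_abs] at this
    nlinarith [pow_le_one₀ (n := 2) (norm_nonneg x) hx]
  -- With `μ = m (t + 1)`, the image of `x = t • e + w` lies within `1 - μ` of `μ • s • e`.
  refine hC.mem_of_norm_sub_smul_le hball hq (μ := m * (t + 1)) (by nlinarith) (by nlinarith) ?_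
  have hTx : ((1 + m * (s - 1)) • (ℝ ∙ e).starProjection + b • (ℝ ∙ e)ᗮ.starProjection) x +
      (m * (s - 1)) • e - (m * (t + 1)) • s • e = ((1 - m) * t - m) • e + b • w := by
    simp only [add_apply, smul_apply,
      Submodule.starProjection_orthogonal_val, Submodule.starProjection_unit_singleton ℝ he]
    module
  have hnorm :
      ‖((1 - m) * t - m) • e + b • w‖ ^ 2 = ((1 - m) * t - m) ^ 2 + b ^ 2 * ‖w‖ ^ 2 := by
    rw [norm_add_sq_real, real_inner_smul_left, real_inner_smul_right, hew, norm_smul, norm_smul,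
      he, Real.norm_eq_abs, Real.norm_eq_abs, mul_pow, mul_pow, sq_abs, sq_abs]
    ring
  rw [hTx, ← sq_le_sq₀ (norm_nonneg _) (by nlinarith), hnorm, hb]
  nlinarith

variable [FiniteDimensional ℝ E]

theorem Submodule.det_smul_starProjection_add_smul_starProjection_orthogonal
    (K : Submodule ℝ E) (a b : ℝ) :
    (a • K.starProjection + b • Kᗮ.starProjection).det = a ^ finrank ℝ K * b ^ finrank ℝ Kᗮ := by
  let φ := K.prodEquivOfIsCompl Kᗮ K.isCompl_orthogonal
  have hconj : φ.symm.toLinearMap ∘ₗ (a • K.starProjection + b • Kᗮ.starProjection : E →L[ℝ] E)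
      ∘ₗ φ.toLinearMap = LinearMap.prodMap (a • LinearMap.id) (b • LinearMap.id) := by
    refine LinearMap.ext fun ⟨x, y⟩ => ?_
    rw [LinearMap.comp_apply, LinearMap.comp_apply, LinearEquiv.coe_coe, LinearEquiv.coe_coe,
      LinearEquiv.symm_apply_eq]
    simp [φ, starProjection_eq_self_iff.2 x.2, (K.starProjection_apply_eq_zero_iff).2 y.2]
  rw [ContinuousLinearMap.det, ← LinearMap.det_conj _ φ.symm, LinearEquiv.symm_symm, hconj,
    LinearMap.det_prodMap, LinearMap.det_smul, LinearMap.det_smul, LinearMap.det_id,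
    LinearMap.det_id, mul_one, mul_one]

theorem Convex.exists_one_lt_det_mapsTo_closedBall {C : Set E} (hC : Convex ℝ C)
    (hball : closedBall 0 1 ⊆ C) {q : E} (hq : q ∈ C) (hqn : (finrank ℝ E : ℝ) < ‖q‖) :
    ∃ (T : E →L[ℝ] E) (v : E), 1 < T.det ∧ MapsTo (fun x => T x + v) (closedBall 0 1) C := by
  set s := ‖q‖
  have hs : 0 < s := (Nat.cast_nonneg _).trans_lt hqn
  set e := s⁻¹ • q
  have he : ‖e‖ = 1 := by rw [norm_smul, norm_inv, norm_norm, inv_mul_cancel₀ hs.ne']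
  have hqe : q = s • e := by simp [e, hs.ne']
  have hrank : finrank ℝ (ℝ ∙ e) + finrank ℝ (ℝ ∙ e)ᗮ = finrank ℝ E :=
    (ℝ ∙ e).finrank_add_finrank_orthogonal
  rw [finrank_span_singleton (norm_ne_zero_iff.1 (he ▸ one_ne_zero))] at hrank
  obtain ⟨m, b, hm, hb, hdet⟩ :=
    exists_one_lt_mul_pow_of_add_one_lt (k := finrank ℝ (ℝ ∙ e)ᗮ) (s := s) (by
      rw [← hrank] at hqn
      push_cast at hqn
      linarith)
  refine ⟨_, _, ?_, hC.mapsTo_closedBall_of_smul_mem hball he (hqe ▸ hq) hm hb⟩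
  rwa [Submodule.det_smul_starProjection_add_smul_starProjection_orthogonal,
    finrank_span_singleton (norm_ne_zero_iff.1 (he ▸ one_ne_zero)), pow_one]

theorem Convex.subset_image_finrank_smul_of_forall_abs_det_le {K : Set E} (hK : Convex ℝ K)
    {T : E →L[ℝ] E} {v : E} (hT : T.det ≠ 0)
    (hTv : MapsTo (fun x => T x + v) (closedBall 0 1) K)
    (hmax : ∀ (T' : E →L[ℝ] E) (v' : E),
      MapsTo (fun x => T' x + v') (closedBall 0 1) K → |T'.det| ≤ |T.det|) :
    K ⊆ (fun x => ((finrank ℝ E : ℝ) • T) x + v) '' closedBall 0 1 := by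
  intro p hp
  set L := T.toContinuousLinearEquivOfDetNeZero hT
  set q := L.symm (p - v)
  have hq : T q + v = p := by
    rw [← T.coe_toContinuousLinearEquivOfDetNeZero hT, ContinuousLinearEquiv.coe_coe,
      L.apply_symm_apply, sub_add_cancel]
  have hqn : ‖q‖ ≤ finrank ℝ E := by
    by_contra! hqn
    have hC : Convex ℝ ((fun x => T x + v) ⁻¹' K) :=
      hK.affine_preimage ((T : E →ₗ[ℝ] E).toAffineMap + AffineMap.const ℝ E v)
    obtain ⟨T₁, v₁, hT₁, hT₁v₁⟩ :=
      hC.exists_one_lt_det_mapsTo_closedBall hTv.subset_preimage (by simpa [hq]) hqn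
    have hcomp : MapsTo (fun x => (T ∘L T₁) x + (T v₁ + v)) (closedBall 0 1) K := by
      intro x hx
      simpa [add_assoc] using hT₁v₁ hx
    have := hmax _ _ hcomp
    rw [ContinuousLinearMap.det, ContinuousLinearMap.toLinearMap_comp, LinearMap.det_comp,
      abs_mul, abs_of_pos (zero_lt_one.trans hT₁)] at this
    nlinarith [abs_pos.2 hT]
  obtain ⟨z, hz, hzq⟩ : q ∈ (finrank ℝ E : ℝ) • closedBall (0 : E) 1 := by
    rw [smul_unitClosedBall_of_nonneg (Nat.cast_nonneg _)]
    simpa using hqn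
  refine ⟨z, hz, ?_⟩
  rw [← hq, ← hzq]
  simp

end InnerProductSpace

section FiniteDimensional

variable {E : Type*} [NormedAddCommGroup E] [NormedSpace ℝ E] [FiniteDimensional ℝ E]
  {F : Type*} [NormedAddCommGroup F] [NormedSpace ℝ F] [FiniteDimensional ℝ F]

theorem IsCompact.setOf_mapsTo_closedBall {K : Set F} (hK : IsCompact K) :
    IsCompact {p : (E →L[ℝ] F) × F | MapsTo (fun x => p.1 x + p.2) (closedBall 0 1) K} := by
  obtain ⟨R, hKR⟩ := hK.isBounded.subset_closedBall 0
  have hclosed :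
      IsClosed {p : (E →L[ℝ] F) × F | MapsTo (fun x => p.1 x + p.2) (closedBall 0 1) K} := by
    simp only [MapsTo, ofPred_forall]
    exact isClosed_biInter fun x _ => hK.isClosed.preimage (by fun_prop)
  refine ((isCompact_closedBall 0 (2 * R)).prod (isCompact_closedBall 0 R)).of_isClosed_subset
    hclosed ?_
  rintro ⟨T, v⟩ hTv
  have hv : ‖v‖ ≤ R := by simpa using hKR (by simpa using hTv (mem_closedBall_self zero_le_one))
  refine ⟨?_, by simpa using hv⟩
  rw [mem_closedBall_zero_iff]
  refine T.opNorm_le_of_unit_norm (by linarith [norm_nonneg v]) fun x hx => ?_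
  have : ‖T x + v‖ ≤ R := by simpa using hKR (hTv (by simp [hx]))
  calc ‖T x‖ = ‖T x + v - v‖ := by simp
    _ ≤ ‖T x + v‖ + ‖v‖ := norm_sub_le _ _
    _ ≤ 2 * R := by linarith

theorem IsCompact.exists_mapsTo_closedBall_forall_abs_det_le {K : Set E} (hK : IsCompact K)
    (hint : (interior K).Nonempty) :
    ∃ (T : E →L[ℝ] E) (v : E), MapsTo (fun x => T x + v) (closedBall 0 1) K ∧ T.det ≠ 0 ∧
      ∀ (T' : E →L[ℝ] E) (v' : E),
        MapsTo (fun x => T' x + v') (closedBall 0 1) K → |T'.det| ≤ |T.det| := by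
  obtain ⟨x₀, hx₀⟩ := hint
  obtain ⟨r, hr, hrK⟩ := nhds_basis_closedBall.mem_iff.1 (mem_interior_iff_mem_nhds.1 hx₀)
  have h₀ : MapsTo (fun x => (r • ContinuousLinearMap.id ℝ E) x + x₀) (closedBall 0 1) K := by
    intro x hx
    apply hrK
    rw [mem_closedBall_zero_iff] at hx
    simpa [dist_eq_norm, norm_smul, abs_of_pos hr] using mul_le_of_le_one_right hr.le hx
  obtain ⟨⟨T, v⟩, hTv, hmax⟩ := hK.setOf_mapsTo_closedBall.exists_isMaxOn
    (f := fun p => |p.1.det|) ⟨(r • ContinuousLinearMap.id ℝ E, x₀), h₀⟩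
    (ContinuousLinearMap.continuous_det.comp continuous_fst).abs.continuousOn
  refine ⟨T, v, hTv, fun hT => ?_, fun T' v' h => hmax (a := (T', v')) h⟩
  have h : |(r • ContinuousLinearMap.id ℝ E).det| ≤ |T.det| := hmax (a := (_, x₀)) h₀
  simp [hT, ContinuousLinearMap.det] at h
  exact (pow_pos (abs_pos.2 hr.ne') _).not_ge h

end FiniteDimensional

theorem MeasureTheory.Measure.addHaar_image_continuousLinearMap_add {E : Type*}
    [NormedAddCommGroup E] [NormedSpace ℝ E] [MeasurableSpace E] [BorelSpace E]
    [FiniteDimensional ℝ E] (μ : Measure E) [μ.IsAddHaarMeasure] (T : E →L[ℝ] E) (v : E)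
    (s : Set E) : μ ((fun x => T x + v) '' s) = ENNReal.ofReal |T.det| * μ s := by
  rw [← image_image (· + v) T, image_add_right, measure_preimage_add_right,
    addHaar_image_continuousLinearMap]

theorem isEllipsoid_image_closedBall {d : ℕ}
    {T : EuclideanSpace ℝ (Fin d) →L[ℝ] EuclideanSpace ℝ (Fin d)} (hT : T.det ≠ 0)
    (v : EuclideanSpace ℝ (Fin d)) : IsEllipsoid ((fun x => T x + v) '' closedBall 0 1) :=
  ⟨(T.toContinuousLinearEquivOfDetNeZero hT).toLinearEquiv, v, by ext; simp⟩

theorem johns_theorem_general {d : ℕ} (K : Set (EuclideanSpace ℝ (Fin d)))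
    (hKcpt : IsCompact K) (hKconv : Convex ℝ K) (hKint : (interior K).Nonempty) :
    ∃ E₁ E₂ : Set (EuclideanSpace ℝ (Fin d)), IsEllipsoid E₁ ∧ IsEllipsoid E₂ ∧
      E₁ ⊆ K ∧ K ⊆ E₂ ∧ volume E₂ ≤ (d : ENNReal) ^ d * volume E₁ := by
  obtain ⟨T, v, hTv, hT, hmax⟩ := hKcpt.exists_mapsTo_closedBall_forall_abs_det_le hKint
  have hdet : ((d : ℝ) • T).det = (d : ℝ) ^ d * T.det := by
    rw [ContinuousLinearMap.det, ContinuousLinearMap.toLinearMap_smul, LinearMap.det_smul,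
      finrank_euclideanSpace_fin]
  have hdT : ((d : ℝ) • T).det ≠ 0 := by
    rw [hdet]
    exact mul_ne_zero (by exact_mod_cast Nat.pow_self_pos.ne') hT
  refine ⟨_, _, isEllipsoid_image_closedBall hT v, isEllipsoid_image_closedBall hdT v,
    hTv.image_subset, ?_, le_of_eq ?_⟩
  · simpa [finrank_euclideanSpace_fin] using
      hKconv.subset_image_finrank_smul_of_forall_abs_det_le hT hTv hmax
  · rw [Measure.addHaar_image_continuousLinearMap_add,
      Measure.addHaar_image_continuousLinearMap_add, hdet, abs_mul,
      ENNReal.ofReal_mul (by positivity), abs_pow, Nat.abs_cast,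
      ENNReal.ofReal_pow (Nat.cast_nonneg _), ENNReal.ofReal_natCast, mul_assoc]

/-- John's theorem (weak form): every convex body `K ⊆ ℝ^d` is squeezed between
two ellipsoids whose volume ratio is at most `d^d`. -/
theorem johns_theorem {d : ℕ} (hd : 1 ≤ d) (K : Set (EuclideanSpace ℝ (Fin d)))
    (hKcpt : IsCompact K) (hKconv : Convex ℝ K) (hKint : (interior K).Nonempty) :
    ∃ E₁ E₂ : Set (EuclideanSpace ℝ (Fin d)), IsEllipsoid E₁ ∧ IsEllipsoid E₂ ∧
      E₁ ⊆ K ∧ K ⊆ E₂ ∧ volume E₂ ≤ (d : ENNReal) ^ d * volume E₁ :=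
  johns_theorem_general K hKcpt hKconv hKint
end

section
/- For every s > 0, the set of Danzer sets with volume parameter s is closed in the space X of closed subsets of R^d with the Chabauty-Fell topology. -/
/-!
A closed convex set `K` of volume `s > 0` has nonempty interior, hence contains a ball `B(x, r)`.
It is then bounded: for a far point `k ∈ K`, convexity puts the ball of radius `r / 2` about the
midpoint of `x` and `k` into `K`, far from `x`, while the part of `K` far from `x` has arbitrarily
small volume since `vol K < ∞`. So `K` is compact. If `K` missed `L`, some `δ`-thickenings of `K`
and `L` would be disjoint; but once `CF (Y n) L` is small enough, the Chabauty–Fell condition on a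
ball containing `K` puts the points of `K ∩ Y n` within `δ` of `L`.
-/

open Metric Set Filter MeasureTheory

/-- The Chabauty–Fell distance on subsets of `ℝ^d`. -/
noncomputable def CF {d : ℕ} (F₁ F₂ : Set (EuclideanSpace ℝ (Fin d))) : ℝ :=
  sInf ({ε : ℝ | 0 < ε ∧ F₁ ∩ ball 0 (1/ε) ⊆ thickening ε F₂ ∧
      F₂ ∩ ball 0 (1/ε) ⊆ thickening ε F₁} ∪ {1})

open Topology

section Convex

variable {E : Type*} [NormedAddCommGroup E] [NormedSpace ℝ E]

theorem Convex.ball_midpoint_subset {K : Set E} (hK : Convex ℝ K) {x k : E} {r : ℝ}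
    (hball : ball x r ⊆ K) (hk : k ∈ K) : ball (midpoint ℝ x k) (r / 2) ⊆ K := by
  intro z hz
  have hz' : (2 : ℝ) • z - k ∈ ball x r := by
    rw [mem_ball, dist_eq_norm] at hz ⊢
    have : (2 : ℝ) • z - k - x = (2 : ℝ) • (z - midpoint ℝ x k) := by
      rw [midpoint_eq_smul_add, invOf_eq_inv]
      module
    rw [this, norm_smul, Real.norm_two]
    linarith
  convert hK (hball hz') hk (by norm_num : (0 : ℝ) ≤ 1 / 2) (by norm_num : (0 : ℝ) ≤ 1 / 2)
    (by norm_num) using 1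
  module

variable [MeasurableSpace E] [BorelSpace E] [FiniteDimensional ℝ E] (μ : Measure E)

theorem Convex.interior_nonempty_of_addHaar_ne_zero [μ.IsAddHaarMeasure] {K : Set E}
    (hK : Convex ℝ K) (h : μ K ≠ 0) : (interior K).Nonempty := by
  rw [hK.interior_nonempty_iff_affineSpan_eq_top]
  by_contra hspan
  exact h (measure_mono_null (subset_affineSpan ℝ K) (Measure.addHaar_affineSubspace μ _ hspan))

theorem tendsto_measure_diff_closedBall {K : Set E} (hK : μ K ≠ ⊤) (x : E) :
    Tendsto (fun R : ℝ => μ (K \ closedBall x R)) atTop (𝓝 0) := by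
  have : IsFiniteMeasure (μ.restrict K) := isFiniteMeasure_restrict.2 hK
  have := tendsto_measure_compl_closedBall_of_isTightMeasureSet
    (isTightMeasureSet_singleton (μ := μ.restrict K)) x
  simpa [Measure.restrict_apply measurableSet_closedBall.compl, sdiff_eq, inter_comm] using this

theorem Convex.isBounded_of_addHaar_ne_zero_of_ne_top [μ.IsAddHaarMeasure] {K : Set E}
    (hK : Convex ℝ K) (h0 : μ K ≠ 0) (hfin : μ K ≠ ⊤) : Bornology.IsBounded K := by
  obtain ⟨x, hx⟩ := hK.interior_nonempty_of_addHaar_ne_zero μ h0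
  obtain ⟨r, hr, hball⟩ := isOpen_iff.1 isOpen_interior x hx
  obtain ⟨R, hR⟩ := ((tendsto_measure_diff_closedBall μ hfin x).eventually_lt_const
    (measure_ball_pos μ x (half_pos hr))).exists
  refine (isBounded_iff_subset_closedBall x).2 ⟨2 * (R + r / 2), fun k hk => ?_⟩
  by_contra hfar
  rw [mem_closedBall, not_le, dist_comm] at hfar
  have htail : ball (midpoint ℝ x k) (r / 2) ⊆ K \ closedBall x R := by
    refine subset_sdiff.2 ⟨hK.ball_midpoint_subset (hball.trans interior_subset) hk,
      (closedBall_disjoint_ball ?_).symm⟩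
    rw [dist_left_midpoint, Real.norm_two]
    linarith
  have := measure_mono (μ := μ) htail
  rw [Measure.addHaar_ball_center, ← Measure.addHaar_ball_center μ x] at this
  exact this.not_gt hR

end Convex

section ChabautyFell

variable {d : ℕ}

theorem inter_ball_subset_thickening_of_CF_lt {F₁ F₂ : Set (EuclideanSpace ℝ (Fin d))} {c : ℝ}
    (hc : c ≤ 1) (h : CF F₁ F₂ < c) : F₁ ∩ ball 0 (1 / c) ⊆ thickening c F₂ := by
  rw [CF] at h
  obtain ⟨ε, hε, hεc⟩ := exists_lt_of_csInf_lt (union_nonempty.2 (.inr (singleton_nonempty 1))) h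
  rcases hε with ⟨hε, hsub, -⟩ | rfl
  · exact (inter_subset_inter_right _ (ball_subset_ball (one_div_le_one_div_of_le hε hεc.le))).trans
      (hsub.trans (thickening_mono hεc.le _))
  · exact absurd hc hεc.not_ge

theorem IsCompact.inter_nonempty_of_tendsto_CF {K L : Set (EuclideanSpace ℝ (Fin d))}
    {Y : ℕ → Set (EuclideanSpace ℝ (Fin d))} (hK : IsCompact K) (hL : IsClosed L)
    (hY : ∀ n, (K ∩ Y n).Nonempty) (h : Tendsto (fun n => CF (Y n) L) atTop (𝓝 0)) :
    (K ∩ L).Nonempty := by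
  rw [← not_disjoint_iff_nonempty_inter]
  intro hKL
  obtain ⟨δ, hδ, hdisj⟩ := hKL.exists_thickenings hK hL
  obtain ⟨ρ, hρ, hKρ⟩ := hK.isBounded.subset_ball_lt 0 0
  set c := min δ (min (1 / ρ) 1)
  have hc : 0 < c := by positivity
  obtain ⟨n, hn⟩ := (h.eventually_lt_const hc).exists
  obtain ⟨y, hyK, hyY⟩ := hY n
  have hρc : ρ ≤ 1 / c := (le_one_div hρ hc).2 ((min_le_right _ _).trans (min_le_left _ _))
  have hyL : y ∈ thickening c L :=
    inter_ball_subset_thickening_of_CF_lt ((min_le_right _ _).trans (min_le_right _ _)) hn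
      ⟨hyY, ball_subset_ball hρc (hKρ hyK)⟩
  exact disjoint_left.1 hdisj (self_subset_thickening hδ K hyK)
    (thickening_mono (min_le_left _ _) L hyL)

end ChabautyFell

theorem danzer_sets_closed_general {d : ℕ} (s : ℝ) (hs : 0 < s)
    (Y : ℕ → Set (EuclideanSpace ℝ (Fin d)))
    (hYD : ∀ n, ∀ K : Set (EuclideanSpace ℝ (Fin d)), IsClosed K → Convex ℝ K →
      volume K = ENNReal.ofReal s → (K ∩ Y n).Nonempty)
    (L : Set (EuclideanSpace ℝ (Fin d))) (hL : IsClosed L)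
    (h : Tendsto (fun n => CF (Y n) L) atTop (nhds 0)) :
    ∀ K : Set (EuclideanSpace ℝ (Fin d)), IsClosed K → Convex ℝ K →
      volume K = ENNReal.ofReal s → (K ∩ L).Nonempty := by
  intro K hKc hKconv hKvol
  have hKbdd : Bornology.IsBounded K :=
    hKconv.isBounded_of_addHaar_ne_zero_of_ne_top volume (by simpa [hKvol] using hs)
      (by simp [hKvol])
  exact (isCompact_of_isClosed_isBounded hKc hKbdd).inter_nonempty_of_tendsto_CF
    hL (fun n => hYD n K hKc hKconv hKvol) h

/-- The set of Danzer sets with volume parameter `s` (closed sets intersecting every closed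
convex set of volume `s`) is closed in the Chabauty–Fell topology (sequential form). -/
theorem danzer_sets_closed {d : ℕ} (s : ℝ) (hs : 0 < s)
    (Y : ℕ → Set (EuclideanSpace ℝ (Fin d))) (hYc : ∀ n, IsClosed (Y n))
    (hYD : ∀ n, ∀ K : Set (EuclideanSpace ℝ (Fin d)), IsClosed K → Convex ℝ K →
      volume K = ENNReal.ofReal s → (K ∩ Y n).Nonempty)
    (L : Set (EuclideanSpace ℝ (Fin d))) (hL : IsClosed L)
    (h : Tendsto (fun n => CF (Y n) L) atTop (nhds 0)) :
    ∀ K : Set (EuclideanSpace ℝ (Fin d)), IsClosed K → Convex ℝ K →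
      volume K = ENNReal.ofReal s → (K ∩ L).Nonempty :=
  danzer_sets_closed_general s hs Y hYD L hL h
end

section
/- A closed set Y ⊆ R^d satisfies ∅ ∉ closure(G0.Y) (in the Chabauty-Fell topology) if and only if there exists r > 0 such that Y ∩ g.closure(B(0,r)) ≠ ∅ for every g ∈ G0. -/
open Metric Set Filter

/-! The Chabauty–Fell distance from a set to `∅` is small exactly when the set misses a large ball
about the origin. So `∅` is a limit of `G₀ • Y` iff, for every `r`, some `g⁻¹ • Y` misses `B(0, r)`,
i.e. `Y` misses `g • B(0, r)`. -/

section CF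

variable {d : ℕ}

theorem CF_nonneg (F₁ F₂ : Set (EuclideanSpace ℝ (Fin d))) : 0 ≤ CF F₁ F₂ := by
  refine le_csInf ⟨1, Or.inr rfl⟩ ?_
  rintro ε (⟨hε, -, -⟩ | rfl)
  · exact hε.le
  · exact zero_le_one

theorem CF_empty_le {F : Set (EuclideanSpace ℝ (Fin d))} {ε : ℝ} (hε : 0 < ε)
    (h : Disjoint F (ball 0 (1 / ε))) : CF F ∅ ≤ ε := by
  refine csInf_le ⟨0, ?_⟩ (Or.inl ⟨hε, ?_, by simp⟩)
  · rintro δ (⟨hδ, -, -⟩ | rfl)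
    · exact hδ.le
    · exact zero_le_one
  · rw [h.inter_eq]
    exact empty_subset _

theorem disjoint_ball_of_CF_empty_lt {F : Set (EuclideanSpace ℝ (Fin d))} {ε : ℝ} (hε : ε ≤ 1)
    (h : CF F ∅ < ε) : Disjoint F (ball 0 (1 / ε)) := by
  unfold CF at h
  obtain ⟨δ, hδ, hδε⟩ := exists_lt_of_csInf_lt (by exact ⟨1, Or.inr rfl⟩) h
  rcases hδ with ⟨hδ, hF, -⟩ | rfl
  · have hFδ : Disjoint F (ball 0 (1 / δ)) := by
      rw [disjoint_iff_inter_eq_empty, ← subset_empty_iff]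
      simpa using hF
    exact hFδ.mono_right (ball_subset_ball (one_div_le_one_div_of_le hδ hδε.le))
  · exact absurd hδε hε.not_gt

theorem tendsto_CF_empty_iff {ι : Type*} {l : Filter ι} {F : ι → Set (EuclideanSpace ℝ (Fin d))} :
    Tendsto (fun i => CF (F i) ∅) l (nhds 0) ↔ ∀ R, ∀ᶠ i in l, Disjoint (F i) (ball 0 R) := by
  constructor
  · intro h R
    have hR : 0 < max R 1 := lt_max_of_lt_right one_pos
    have hε : 1 / max R 1 ≤ 1 := (div_le_one hR).2 (le_max_right R 1)
    filter_upwards [h.eventually (eventually_lt_nhds (one_div_pos.2 hR))] with i hi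
    have hdisj := disjoint_ball_of_CF_empty_lt hε hi
    rw [one_div_one_div] at hdisj
    exact hdisj.mono_right (ball_subset_ball (le_max_left R 1))
  · intro h
    refine tendsto_order.2 ⟨fun a ha => Eventually.of_forall fun i => ha.trans_le (CF_nonneg _ _),
      fun a ha => ?_⟩
    filter_upwards [h (1 / (a / 2))] with i hi
    exact (CF_empty_le (half_pos ha) hi).trans_lt (half_lt_self ha)

end CF

theorem exists_seq_eventually_disjoint_ball_iff {α ι : Type*} [PseudoMetricSpace α] (x : α)
    (F : ι → Set α) :
    (∃ g : ℕ → ι, ∀ R, ∀ᶠ n in atTop, Disjoint (F (g n)) (ball x R)) ↔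
      ∀ r > 0, ∃ i, Disjoint (F i) (closedBall x r) := by
  constructor
  · rintro ⟨g, hg⟩ r -
    obtain ⟨n, hn⟩ := (hg (r + 1)).exists
    exact ⟨g n, hn.mono_right (closedBall_subset_ball (lt_add_one r))⟩
  · intro h
    choose g hg using fun n : ℕ => h ((n : ℝ) + 1) (by positivity)
    refine ⟨g, fun R => ?_⟩
    filter_upwards [(tendsto_natCast_atTop_atTop (R := ℝ)).eventually_ge_atTop R] with n hn
    exact (hg n).mono_right (ball_subset_closedBall.trans (closedBall_subset_closedBall (by linarith)))

theorem empty_not_in_closure_iff_general {d : ℕ}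
    (G₀ : Subgroup (EuclideanSpace ℝ (Fin d) ≃ᵃ[ℝ] EuclideanSpace ℝ (Fin d)))
    (Y : Set (EuclideanSpace ℝ (Fin d))) :
    (¬ ∃ g : ℕ → G₀,
      Tendsto (fun n => CF (⇑(g n : EuclideanSpace ℝ (Fin d) ≃ᵃ[ℝ] EuclideanSpace ℝ (Fin d)) '' Y)
        (∅ : Set (EuclideanSpace ℝ (Fin d)))) atTop (nhds 0)) ↔
    ∃ r : ℝ, 0 < r ∧ ∀ g ∈ G₀, (Y ∩ ⇑g '' closedBall 0 r).Nonempty := by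
  simp only [tendsto_CF_empty_iff]
  rw [exists_seq_eventually_disjoint_ball_iff (0 : EuclideanSpace ℝ (Fin d))
    (fun g : G₀ => ⇑(g : EuclideanSpace ℝ (Fin d) ≃ᵃ[ℝ] EuclideanSpace ℝ (Fin d)) '' Y)]
  push Not
  refine exists_congr fun r => and_congr_right fun _ => ?_
  have hmeet : ∀ g : EuclideanSpace ℝ (Fin d) ≃ᵃ[ℝ] EuclideanSpace ℝ (Fin d),
      ¬Disjoint (⇑g '' Y) (closedBall 0 r) ↔ (Y ∩ ⇑g⁻¹ '' closedBall 0 r).Nonempty := by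
    intro g
    rw [not_disjoint_iff_nonempty_inter, image_inter_nonempty_iff, AffineEquiv.inv_def,
      AffineEquiv.image_symm]
  constructor
  · intro h g hg
    simpa using (hmeet g⁻¹).1 (h ⟨g⁻¹, G₀.inv_mem hg⟩)
  · rintro h ⟨g, hg⟩
    exact (hmeet g).2 (h g⁻¹ (G₀.inv_mem hg))

/-- A closed set `Y ⊆ ℝ^d` satisfies `∅ ∉ closure(G₀.Y)` (Chabauty–Fell, sequentially) iff
there is `r > 0` with `Y ∩ g.closure(B(0,r)) ≠ ∅` for every `g ∈ G₀`. -/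
theorem empty_not_in_closure_iff {d : ℕ}
    (G₀ : Subgroup (EuclideanSpace ℝ (Fin d) ≃ᵃ[ℝ] EuclideanSpace ℝ (Fin d)))
    (Y : Set (EuclideanSpace ℝ (Fin d))) (hY : IsClosed Y) :
    (¬ ∃ g : ℕ → G₀,
      Tendsto (fun n => CF (⇑(g n : EuclideanSpace ℝ (Fin d) ≃ᵃ[ℝ] EuclideanSpace ℝ (Fin d)) '' Y)
        (∅ : Set (EuclideanSpace ℝ (Fin d)))) atTop (nhds 0)) ↔
    ∃ r : ℝ, 0 < r ∧ ∀ g ∈ G₀, (Y ∩ ⇑g '' closedBall 0 r).Nonempty :=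
  empty_not_in_closure_iff_general G₀ Y
end

section
/- For r > 0 and x ∈ R^d with ‖x‖ > r, there exists a closed centered ellipsoid E(r,x) containing the ball B(0,r) and the point x, with Vol(E(r,x)) = β_d · r^{d-1} · ‖x‖, where β_d is the volume of the unit ball in R^d. -/
/-!
Let `K` be the line through `x` and let `L` act as multiplication by `‖x‖` on `K` and by `r` on
`Kᗮ`. Then `L (x / ‖x‖) = x` and `det L = ‖x‖ r^(d-1)`. By Pythagoras on the two orthogonal
components, `L⁻¹` (which scales by `‖x‖⁻¹` and `r⁻¹`) maps `B(0,r)` into the unit ball, so the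
ellipsoid `L(B(0,1))` contains `B(0,r)`.
-/

open Metric MeasureTheory Set

namespace Submodule

variable {𝕜 E : Type*} [RCLike 𝕜] [NormedAddCommGroup E] [InnerProductSpace 𝕜 E]
  (K : Submodule 𝕜 E) [K.HasOrthogonalProjection]

noncomputable def orthogonalDilation (a b : 𝕜) : E →L[𝕜] E :=
  a • K.starProjection + b • Kᗮ.starProjection

variable {K}

theorem orthogonalDilation_apply (a b : 𝕜) (w : E) :
    K.orthogonalDilation a b w = a • K.starProjection w + b • Kᗮ.starProjection w :=
  rfl

theorem orthogonalDilation_apply_of_mem (a b : 𝕜) {v : E} (hv : v ∈ K) :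
    K.orthogonalDilation a b v = a • v := by
  simp [orthogonalDilation_apply, starProjection_eq_self_iff.2 hv,
    starProjection_orthogonal_apply_eq_zero hv]

theorem orthogonalDilation_apply_of_mem_orthogonal (a b : 𝕜) {v : E} (hv : v ∈ Kᗮ) :
    K.orthogonalDilation a b v = b • v := by
  simp [orthogonalDilation_apply, starProjection_eq_self_iff.2 hv,
    (K.starProjection_apply_eq_zero_iff).2 hv]

theorem orthogonalDilation_orthogonalDilation_apply (a b a' b' : 𝕜) (w : E) :
    K.orthogonalDilation a b (K.orthogonalDilation a' b' w) =
      K.orthogonalDilation (a * a') (b * b') w := by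
  have hP : K.starProjection w ∈ K := starProjection_apply_mem K w
  simp [orthogonalDilation_apply, starProjection_eq_self_iff.2 hP, mul_smul]

theorem orthogonalDilation_orthogonalDilation_inv_apply {a b : 𝕜} (ha : a ≠ 0) (hb : b ≠ 0)
    (w : E) : K.orthogonalDilation a b (K.orthogonalDilation a⁻¹ b⁻¹ w) = w := by
  rw [orthogonalDilation_orthogonalDilation_apply, mul_inv_cancel₀ ha, mul_inv_cancel₀ hb,
    orthogonalDilation_apply, one_smul, one_smul, starProjection_add_starProjection_orthogonal]

theorem norm_orthogonalDilation_apply_le {a b : 𝕜} {c : ℝ} (ha : ‖a‖ ≤ c) (hb : ‖b‖ ≤ c)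
    (w : E) : ‖K.orthogonalDilation a b w‖ ≤ c * ‖w‖ := by
  have hc : 0 ≤ c := (norm_nonneg a).trans ha
  have hpyth : ‖K.orthogonalDilation a b w‖ ^ 2 =
      ‖a‖ ^ 2 * ‖K.starProjection w‖ ^ 2 + ‖b‖ ^ 2 * ‖Kᗮ.starProjection w‖ ^ 2 := by
    rw [orthogonalDilation_apply, sq,
      norm_add_sq_eq_norm_sq_add_norm_sq_of_inner_eq_zero (𝕜 := 𝕜), norm_smul, norm_smul]
    · ring
    exact inner_right_of_mem_orthogonal (K.smul_mem _ (starProjection_apply_mem K w))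
      (Kᗮ.smul_mem _ (starProjection_apply_mem Kᗮ w))
  refine (pow_le_pow_iff_left₀ (norm_nonneg _) (by positivity) two_ne_zero).1 ?_
  calc ‖K.orthogonalDilation a b w‖ ^ 2
      ≤ c ^ 2 * ‖K.starProjection w‖ ^ 2 + c ^ 2 * ‖Kᗮ.starProjection w‖ ^ 2 := by
        rw [hpyth]; gcongr
    _ = (c * ‖w‖) ^ 2 := by rw [mul_pow, norm_sq_eq_add_norm_sq_starProjection w K]; ring

theorem det_orthogonalDilation [FiniteDimensional 𝕜 E] (a b : 𝕜) :
    LinearMap.det (K.orthogonalDilation a b : E →ₗ[𝕜] E) =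
      a ^ Module.finrank 𝕜 K * b ^ Module.finrank 𝕜 Kᗮ := by
  let e := K.prodEquivOfIsCompl Kᗮ K.isCompl_orthogonal
  let D := LinearMap.prodMap (a • LinearMap.id : K →ₗ[𝕜] K) (b • LinearMap.id : Kᗮ →ₗ[𝕜] Kᗮ)
  have hsemiconj : (K.orthogonalDilation a b : E →ₗ[𝕜] E) ∘ₗ e = e ∘ₗ D := by
    ext ⟨k, hk⟩
    · simpa [e, D] using orthogonalDilation_apply_of_mem a b hk
    · simpa [e, D] using orthogonalDilation_apply_of_mem_orthogonal a b hk
  rw [(LinearEquiv.eq_comp_toLinearMap_symm _ _).2 hsemiconj, LinearMap.comp_assoc,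
    LinearMap.det_conj, LinearMap.det_prodMap, LinearMap.det_smul, LinearMap.det_smul,
    LinearMap.det_id, LinearMap.det_id, mul_one, mul_one]

theorem closedBall_subset_image_orthogonalDilation {a b : 𝕜} {r : ℝ} (hr : 0 < r)
    (ha : r ≤ ‖a‖) (hb : r ≤ ‖b‖) :
    closedBall 0 r ⊆ K.orthogonalDilation a b '' closedBall 0 1 := by
  intro w hw
  have ha0 : a ≠ 0 := norm_pos_iff.1 (hr.trans_le ha)
  have hb0 : b ≠ 0 := norm_pos_iff.1 (hr.trans_le hb)
  refine ⟨K.orthogonalDilation a⁻¹ b⁻¹ w, ?_,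
    orthogonalDilation_orthogonalDilation_inv_apply ha0 hb0 w⟩
  rw [mem_closedBall_zero_iff] at hw ⊢
  calc ‖K.orthogonalDilation a⁻¹ b⁻¹ w‖ ≤ r⁻¹ * ‖w‖ := by
        apply norm_orthogonalDilation_apply_le <;> rw [norm_inv] <;> gcongr
    _ ≤ 1 := by rw [inv_mul_le_iff₀ hr, mul_one]; exact hw

end Submodule

open Submodule Module in
theorem exists_centered_ellipsoid_general {d : ℕ} (r : ℝ) (hr : 0 < r)
    (x : EuclideanSpace ℝ (Fin d)) (hx : r < ‖x‖) :
    ∃ E : Set (EuclideanSpace ℝ (Fin d)),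
      (∃ L : EuclideanSpace ℝ (Fin d) ≃ₗ[ℝ] EuclideanSpace ℝ (Fin d),
        E = ⇑L '' closedBall 0 1) ∧
      closedBall 0 r ⊆ E ∧ x ∈ E ∧
      volume E = volume (closedBall (0 : EuclideanSpace ℝ (Fin d)) 1) *
        ENNReal.ofReal (r ^ (d - 1) * ‖x‖) := by
  have hx0 : x ≠ 0 := norm_pos_iff.1 (hr.trans hx)
  let L := (ℝ ∙ x).orthogonalDilation ‖x‖ r
  have hdim : finrank ℝ (ℝ ∙ x)ᗮ = d - 1 := by
    have := (ℝ ∙ x).finrank_add_finrank_orthogonal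
    rw [finrank_span_singleton hx0, finrank_euclideanSpace_fin] at this
    omega
  have hdet : LinearMap.det (L : EuclideanSpace ℝ (Fin d) →ₗ[ℝ] EuclideanSpace ℝ (Fin d)) =
      r ^ (d - 1) * ‖x‖ := by
    rw [det_orthogonalDilation, finrank_span_singleton hx0, hdim, pow_one, mul_comm]
  have hdet_pos : 0 < r ^ (d - 1) * ‖x‖ := mul_pos (pow_pos hr _) (hr.trans hx)
  refine ⟨L '' closedBall 0 1, ⟨LinearMap.equivOfDetNeZero L (hdet ▸ hdet_pos.ne'), rfl⟩,
    ?_, ?_, ?_⟩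
  · exact closedBall_subset_image_orthogonalDilation hr (by simpa using hx.le) (Real.le_norm_self r)
  · refine ⟨‖x‖⁻¹ • x, by simp [norm_smul, hx0], ?_⟩
    rw [orthogonalDilation_apply_of_mem _ _ (smul_mem _ _ (mem_span_singleton_self x)),
      smul_smul, mul_inv_cancel₀ (norm_ne_zero_iff.2 hx0), one_smul]
  · rw [Measure.addHaar_image_continuousLinearMap, hdet, abs_of_pos hdet_pos, mul_comm]

/-- For `r > 0` and `x` with `‖x‖ > r` there is a closed centered ellipsoid (image of the
closed unit ball under an invertible linear map) containing `B(0,r)` and `x`, of volume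
`β_d · r^{d-1} · ‖x‖` where `β_d` is the volume of the unit ball. -/
theorem exists_centered_ellipsoid {d : ℕ} (hd : 1 ≤ d) (r : ℝ) (hr : 0 < r)
    (x : EuclideanSpace ℝ (Fin d)) (hx : r < ‖x‖) :
    ∃ E : Set (EuclideanSpace ℝ (Fin d)),
      (∃ L : EuclideanSpace ℝ (Fin d) ≃ₗ[ℝ] EuclideanSpace ℝ (Fin d),
        E = ⇑L '' closedBall 0 1) ∧
      closedBall 0 r ⊆ E ∧ x ∈ E ∧
      volume E = volume (closedBall (0 : EuclideanSpace ℝ (Fin d)) 1) *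
        ENNReal.ofReal (r ^ (d - 1) * ‖x‖) :=
  exists_centered_ellipsoid_general r hr x hx
end

section
/- If Y ⊆ R^d (d ≥ 1) is a Danzer set, then for every n ∈ N and every ε > 0 there is an ellipsoid E with Vol(E) < ε and #(E ∩ Y) ≥ n. -/
/-!
Induct on `n`, keeping track of `|det Λ|` for an ellipsoid `Λ (closedBall 0 1) + v`. In the
coordinates in which the current ellipsoid is the unit ball `B`, take `y` in the box
`[0, L] × [K, 2K] × [0, 1]ᵈ⁻²`. The shear `x ↦ x - (y₀ / y₁) x₁ e₀`, where `|y₀ / y₁| ≤ L / K`,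
sends `y` into the hyperplane `x₀ = 0` and `B` into the box `[-1 - L/K, 1 + L/K] × [-1, 1]ᵈ⁻¹`,
so both end up in the box of half-sides `(1 + L/K, 2K, 1, …, 1)`, which lies in an ellipsoid of
determinant `√dᵈ · 2K (1 + L/K) = 2 √dᵈ (K + L)`, while the box of candidates has volume `L K`.
Choosing `L` so that the image of that box has volume `s`, the Danzer set meets it in a point
outside the old ellipsoid, and the new determinant `2 √dᵈ (K |det Λ| + s / K)` is small once `K`
is large and then `|det Λ|` is small compared to `1 / K`.
-/

open Metric MeasureTheory Set

theorem Convex.image_linearEquiv_add {E : Type*} [AddCommGroup E] [Module ℝ E]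
    (L : E ≃ₗ[ℝ] E) (v : E) {s : Set E} (hs : Convex ℝ s) :
    Convex ℝ ((fun x => L x + v) '' s) := by
  rw [← image_image (· + v) L, image_add_right]
  exact (hs.linear_image L.toLinearMap).translate_preimage_left (-v)

section Affine

variable {E : Type*} [NormedAddCommGroup E] [NormedSpace ℝ E] [FiniteDimensional ℝ E]

theorem IsClosed.image_linearEquiv_add (L : E ≃ₗ[ℝ] E) (v : E) {s : Set E} (hs : IsClosed s) :
    IsClosed ((fun x => L x + v) '' s) :=
  (L.toContinuousLinearEquiv.toHomeomorph.trans (Homeomorph.addRight v)).isClosedMap s hs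

theorem MeasureTheory.Measure.addHaar_image_linearEquiv_add [MeasurableSpace E] [BorelSpace E]
    (μ : Measure E) [μ.IsAddHaarMeasure] (L : E ≃ₗ[ℝ] E) (v : E) (s : Set E) :
    μ ((fun x => L x + v) '' s) = ENNReal.ofReal |LinearMap.det (L : E →ₗ[ℝ] E)| * μ s := by
  rw [← image_image (· + v) L, image_add_right, measure_preimage_add_right]
  exact μ.addHaar_image_linearMap _ s

def ellipsoid (L : E ≃ₗ[ℝ] E) (v : E) : Set E :=
  (fun x => L x + v) '' closedBall 0 1

end Affine

theorem Fintype.prod_mulSingle_mul_mulSingle {ι M : Type*} [Fintype ι] [DecidableEq ι]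
    [CommMonoid M] (a b : ι) (x y : M) :
    ∏ i, (Pi.mulSingle a x * Pi.mulSingle b y : ι → M) i = x * y := by
  simp [Finset.prod_mul_distrib, Finset.prod_pi_mulSingle']

theorem sqrt_card_pos (ι : Type*) [Fintype ι] [Nonempty ι] : 0 < √(Fintype.card ι) :=
  Real.sqrt_pos.mpr (Nat.cast_pos.mpr Fintype.card_pos)

namespace EuclideanSpace

theorem isClosed_preimage_Icc {ι : Type*} (lo hi : ι → ℝ) :
    IsClosed (WithLp.ofLp ⁻¹' Icc lo hi : Set (EuclideanSpace ℝ ι)) :=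
  isClosed_Icc.preimage (PiLp.continuous_ofLp 2 _)

theorem convex_preimage_Icc {ι : Type*} (lo hi : ι → ℝ) :
    Convex ℝ (WithLp.ofLp ⁻¹' Icc lo hi : Set (EuclideanSpace ℝ ι)) :=
  (convex_Icc lo hi).linear_preimage (WithLp.linearEquiv 2 ℝ (ι → ℝ)).toLinearMap

variable {ι : Type*} [Fintype ι]

theorem volume_preimage_Icc (lo hi : ι → ℝ) :
    volume (WithLp.ofLp ⁻¹' Icc lo hi : Set (EuclideanSpace ℝ ι)) =
      ∏ i, ENNReal.ofReal (hi i - lo i) := by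
  rw [← Real.volume_Icc_pi]
  exact (volume_preserving_symm_measurableEquiv_toLp ι).measure_preimage
    measurableSet_Icc.nullMeasurableSet

theorem abs_apply_le_of_mem_closedBall {x : EuclideanSpace ℝ ι} {r : ℝ} (hx : x ∈ closedBall 0 r)
    (i : ι) : |x i| ≤ r :=
  (by simpa using PiLp.norm_apply_le x i : |x i| ≤ ‖x‖).trans (mem_closedBall_zero_iff.mp hx)

theorem norm_le_sqrt_card_mul {x : EuclideanSpace ℝ ι} {t : ℝ} (ht : 0 ≤ t)
    (hx : ∀ i, |x i| ≤ t) : ‖x‖ ≤ √(Fintype.card ι) * t := by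
  rw [norm_eq, ← Real.sqrt_sq ht, ← Real.sqrt_mul (Nat.cast_nonneg _)]
  gcongr
  calc ∑ i, ‖x i‖ ^ 2 ≤ ∑ _i : ι, t ^ 2 := by
        gcongr with i
        simpa using hx i
    _ = Fintype.card ι * t ^ 2 := by simp

theorem exists_linearEquiv_abs_det_lt [Nonempty ι] {δ : ℝ} (hδ : 0 < δ) :
    ∃ Λ : EuclideanSpace ℝ ι ≃ₗ[ℝ] EuclideanSpace ℝ ι,
      |LinearMap.det (Λ : EuclideanSpace ℝ ι →ₗ[ℝ] EuclideanSpace ℝ ι)| < δ := by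
  set ρ := min 1 (δ / 2)
  have hρ : 0 < ρ := by positivity
  refine ⟨LinearEquiv.smulOfNeZero ℝ _ ρ hρ.ne', ?_⟩
  change |LinearMap.det (ρ • LinearMap.id : EuclideanSpace ℝ ι →ₗ[ℝ] _)| < δ
  rw [LinearMap.det_smul, LinearMap.det_id, finrank_euclideanSpace, mul_one, abs_pow,
    abs_of_pos hρ]
  calc ρ ^ Fintype.card ι ≤ ρ := pow_le_of_le_one hρ.le (min_le_left _ _) Fintype.card_ne_zero
    _ ≤ δ / 2 := min_le_right _ _
    _ < δ := half_lt_self hδ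

end EuclideanSpace

namespace Danzer

variable {ι : Type*} [DecidableEq ι] {a b : ι}

local notation "𝔼" => EuclideanSpace ℝ ι

def candidateBox (a b : ι) (K L : ℝ) : Set 𝔼 :=
  WithLp.ofLp ⁻¹' Icc (Pi.single b K) (Pi.single b K + Pi.mulSingle a L * Pi.mulSingle b K)

theorem mem_candidateBox_iff (hab : a ≠ b) {K L : ℝ} {y : 𝔼} :
    y ∈ candidateBox a b K L ↔
      y a ∈ Icc 0 L ∧ y b ∈ Icc K (2 * K) ∧ ∀ i, i ≠ a → i ≠ b → y i ∈ Icc 0 1 := by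
  simp only [candidateBox, mem_preimage, mem_Icc, Pi.le_def, Pi.add_apply, Pi.mul_apply,
    Pi.single_apply, Pi.mulSingle_apply, ← forall_and]
  constructor
  · intro h
    refine ⟨by simpa [hab] using h a, by simpa [hab.symm, two_mul] using h b, fun i ha hb => ?_⟩
    simpa [ha, hb] using h i
  · rintro ⟨ha, hb, h⟩ i
    by_cases hia : i = a
    · subst hia; simpa [hab] using ha
    by_cases hib : i = b
    · subst hib; simpa [hia, two_mul] using hb
    simpa [hia, hib] using h i hia hib

variable [Fintype ι]

theorem volume_candidateBox {K L : ℝ} (hK : 0 ≤ K) (hL : 0 ≤ L) :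
    volume (candidateBox a b K L) = ENNReal.ofReal (L * K) := by
  rw [candidateBox, EuclideanSpace.volume_preimage_Icc]
  simp only [Pi.add_apply, add_sub_cancel_left]
  rw [← ENNReal.ofReal_prod_of_nonneg, Fintype.prod_mulSingle_mul_mulSingle]
  intro i _
  simp only [Pi.mul_apply, Pi.mulSingle_apply]
  split_ifs <;> positivity

theorem notMem_closedBall_of_mem_candidateBox {K L : ℝ} (hK : 1 < K) {y : 𝔼}
    (hy : y ∈ candidateBox a b K L) : y ∉ closedBall 0 1 := by
  have hyb : K ≤ y b := by simpa using hy.1 b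
  rw [mem_closedBall_zero_iff, not_le]
  calc 1 < y b := hK.trans_le hyb
    _ ≤ |y b| := le_abs_self _
    _ ≤ ‖y‖ := by simpa using PiLp.norm_apply_le y b

noncomputable def shearScale (hab : a ≠ b) (c : ℝ) (r : ι → ℝ) (hr : ∀ i, r i ≠ 0) :
    𝔼 ≃ₗ[ℝ] 𝔼 :=
  Matrix.toLinearEquiv (EuclideanSpace.basisFun ι ℝ).toBasis
    (Matrix.diagonal r⁻¹ * Matrix.transvection a b (-c)) (by
      simp [Matrix.det_mul, Matrix.det_diagonal, Finset.prod_ne_zero_iff, hr, hab])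

theorem shearScale_apply (hab : a ≠ b) (c : ℝ) (r : ι → ℝ) (hr : ∀ i, r i ≠ 0) (x : 𝔼)
    (i : ι) : shearScale hab c r hr x i = (x i - if i = a then c * x b else 0) / r i := by
  rw [shearScale, Matrix.toLinearEquiv_apply, ← Matrix.toEuclideanLin_eq_toLin_orthonormal]
  simp only [Matrix.transvection, Matrix.mul_add, mul_one, map_add, Matrix.toLpLin_mul_same,
    LinearMap.add_apply, Matrix.toLpLin_apply, LinearMap.coe_comp, Function.comp_apply,
    Matrix.single_mulVec, neg_mul, PiLp.add_apply, Matrix.mulVec_diagonal, Pi.inv_apply,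
    Function.update_apply, Pi.zero_apply, mul_ite, mul_neg, mul_zero]
  split_ifs <;> ring

theorem det_shearScale (hab : a ≠ b) (c : ℝ) (r : ι → ℝ) (hr : ∀ i, r i ≠ 0) :
    LinearMap.det (shearScale hab c r hr : 𝔼 →ₗ[ℝ] 𝔼) = (∏ i, r i)⁻¹ :=
  (LinearMap.det_toLin _ _).trans (by simp [Matrix.det_diagonal, hab])

theorem abs_sub_shear_le (hab : a ≠ b) {K L : ℝ} (hK : 1 ≤ K) (hL : 0 ≤ L) {y : 𝔼}
    (hy : y ∈ candidateBox a b K L) {x : 𝔼} (hx : x ∈ insert y (closedBall 0 1)) (i : ι) :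
    |x i - (if i = a then y a / y b * x b else 0)| ≤
      (Pi.mulSingle a (1 + L / K) * Pi.mulSingle b (2 * K) : ι → ℝ) i := by
  obtain ⟨hya, hyb, hyi⟩ := (mem_candidateBox_iff hab).mp hy
  have hyb0 : 0 < y b := by linarith [hyb.1]
  have hx1 : ∀ {z : 𝔼}, z ∈ closedBall 0 1 → ∀ j, |z j| ≤ 1 :=
    EuclideanSpace.abs_apply_le_of_mem_closedBall
  rcases eq_or_ne i a with rfl | hia
  · simp only [if_true, Pi.mul_apply, Pi.mulSingle_eq_same, Pi.mulSingle_eq_of_ne hab, mul_one]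
    rcases hx with rfl | hx
    · rw [div_mul_cancel₀ _ hyb0.ne', sub_self, abs_zero]
      positivity
    · have hc : |y i / y b| ≤ L / K := by
        rw [abs_div, abs_of_nonneg hya.1, abs_of_pos hyb0]
        exact div_le_div₀ hL hya.2 (by linarith) hyb.1
      calc |x i - y i / y b * x b| ≤ |x i| + |y i / y b| * |x b| := by
            rw [← abs_mul]; exact abs_sub _ _
        _ ≤ 1 + L / K * 1 := by gcongr <;> exact hx1 hx _
        _ = 1 + L / K := by ring
  simp only [hia, if_false, sub_zero, Pi.mul_apply, Pi.mulSingle_eq_of_ne hia, one_mul]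
  rcases eq_or_ne i b with rfl | hib
  · rw [Pi.mulSingle_eq_same]
    rcases hx with rfl | hx
    · rw [abs_of_pos hyb0]; exact hyb.2
    · linarith [hx1 hx i]
  · rw [Pi.mulSingle_eq_of_ne hib]
    rcases hx with rfl | hx
    · rw [abs_of_nonneg (hyi i hia hib).1]; exact (hyi i hia hib).2
    · exact hx1 hx i

theorem exists_insert_subset_image_closedBall (hab : a ≠ b) {K L : ℝ} (hK : 1 ≤ K)
    (hL : 0 ≤ L) {y : 𝔼} (hy : y ∈ candidateBox a b K L) :
    ∃ g : 𝔼 ≃ₗ[ℝ] 𝔼, insert y (closedBall 0 1) ⊆ g '' closedBall 0 1 ∧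
      |LinearMap.det (g : 𝔼 →ₗ[ℝ] 𝔼)| = 2 * √(Fintype.card ι) ^ Fintype.card ι * (K + L) := by
  set σ : ι → ℝ := Pi.mulSingle a (1 + L / K) * Pi.mulSingle b (2 * K)
  have hσ : ∀ i, 0 < σ i := fun i => by
    simp only [σ, Pi.mul_apply, Pi.mulSingle_apply]
    split_ifs <;> positivity
  have : Nonempty ι := ⟨a⟩
  have hd := sqrt_card_pos ι
  have hr : ∀ i, √(Fintype.card ι) * σ i ≠ 0 := fun i => (mul_pos hd (hσ i)).ne'
  set h := shearScale hab (y a / y b) _ hr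
  refine ⟨h.symm, fun x hx => ?_, ?_⟩
  · rw [LinearEquiv.image_symm_eq_preimage, mem_preimage, mem_closedBall_zero_iff]
    calc ‖h x‖ ≤ √(Fintype.card ι) * (√(Fintype.card ι))⁻¹ := by
          refine EuclideanSpace.norm_le_sqrt_card_mul (inv_nonneg.mpr hd.le) fun i => ?_
          rw [shearScale_apply, abs_div, abs_of_pos (mul_pos hd (hσ i)),
            div_le_iff₀ (mul_pos hd (hσ i)), inv_mul_cancel_left₀ hd.ne']
          exact abs_sub_shear_le hab hK hL hy hx i
      _ = 1 := mul_inv_cancel₀ hd.ne'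
  · have hK0 : 0 < K := by linarith
    rw [LinearEquiv.det_coe_symm, det_shearScale, inv_inv, Finset.prod_mul_distrib,
      Finset.prod_const, Finset.card_univ, Fintype.prod_mulSingle_mul_mulSingle,
      abs_of_pos (by positivity)]
    field_simp

theorem exists_ellipsoid_insert_subset (hab : a ≠ b) {Y : Set 𝔼} {s : ℝ} (hs : 0 < s)
    (hY : ∀ C : Set 𝔼, IsClosed C → Convex ℝ C → volume C = ENNReal.ofReal s → (C ∩ Y).Nonempty)
    (Λ : 𝔼 ≃ₗ[ℝ] 𝔼) (v : 𝔼) {K : ℝ} (hK : 1 < K) :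
    ∃ Λ' : 𝔼 ≃ₗ[ℝ] 𝔼, ∃ y ∈ Y, y ∉ ellipsoid Λ v ∧ insert y (ellipsoid Λ v) ⊆ ellipsoid Λ' v ∧
      |LinearMap.det (Λ' : 𝔼 →ₗ[ℝ] 𝔼)| =
        2 * √(Fintype.card ι) ^ Fintype.card ι * (K * |LinearMap.det (Λ : 𝔼 →ₗ[ℝ] 𝔼)| + s / K) := by
  set Δ := |LinearMap.det (Λ : 𝔼 →ₗ[ℝ] 𝔼)|
  have hΔ : 0 < Δ := abs_pos.mpr (LinearEquiv.isUnit_det' Λ).ne_zero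
  have hK0 : 0 < K := by linarith
  set L := s / (K * Δ)
  have hL : 0 ≤ L := by positivity
  have hLΔ : K * Δ * L = s := mul_div_cancel₀ _ (by positivity)
  have hbody : volume ((fun x => Λ x + v) '' candidateBox a b K L) = ENNReal.ofReal s := by
    rw [volume.addHaar_image_linearEquiv_add, volume_candidateBox hK0.le hL,
      ← ENNReal.ofReal_mul hΔ.le]
    congr 1
    linear_combination hLΔ
  obtain ⟨y, ⟨y', hy', rfl⟩, hyY⟩ := hY _
    ((EuclideanSpace.isClosed_preimage_Icc _ _).image_linearEquiv_add Λ v)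
    ((EuclideanSpace.convex_preimage_Icc _ _).image_linearEquiv_add Λ v) hbody
  obtain ⟨g, hg, hdet⟩ := exists_insert_subset_image_closedBall hab hK.le hL hy'
  refine ⟨g.trans Λ, _, hyY, ?_, ?_, ?_⟩
  · rintro ⟨z, hz, hzy⟩
    have : z = y' := Λ.injective (add_right_cancel hzy)
    exact notMem_closedBall_of_mem_candidateBox hK hy' (this ▸ hz)
  · simpa only [ellipsoid, image_insert_eq, LinearEquiv.trans_apply, image_image] using
      image_mono (f := fun x => Λ x + v) hg
  · rw [LinearEquiv.coe_trans, LinearMap.det_comp, abs_mul, hdet, ← hLΔ]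
    change Δ * _ = _
    field_simp

theorem exists_ellipsoid_abs_det_lt_le_encard (hab : a ≠ b) {Y : Set 𝔼} {s : ℝ} (hs : 0 < s)
    (hY : ∀ C : Set 𝔼, IsClosed C → Convex ℝ C → volume C = ENNReal.ofReal s → (C ∩ Y).Nonempty)
    (n : ℕ) {δ : ℝ} (hδ : 0 < δ) :
    ∃ (Λ : 𝔼 ≃ₗ[ℝ] 𝔼) (v : 𝔼), |LinearMap.det (Λ : 𝔼 →ₗ[ℝ] 𝔼)| < δ ∧
      (n : ℕ∞) ≤ (ellipsoid Λ v ∩ Y).encard := by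
  have : Nonempty ι := ⟨a⟩
  induction n generalizing δ with
  | zero =>
    obtain ⟨Λ, hΛ⟩ := EuclideanSpace.exists_linearEquiv_abs_det_lt (ι := ι) hδ
    exact ⟨Λ, 0, hΛ, by simp⟩
  | succ n ih =>
    set C := 2 * √(Fintype.card ι) ^ Fintype.card ι
    have hC : 0 < C := by have := sqrt_card_pos ι; positivity
    -- first `K` makes the term `C * (s / K)` of the new determinant small, then `Λ` the other one
    obtain ⟨K, hK⟩ := exists_gt (max 1 (2 * C * s / δ))
    rw [max_lt_iff, div_lt_iff₀ hδ] at hK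
    have hK0 : 0 < K := by linarith
    obtain ⟨Λ, v, hΛ, hn⟩ := ih (δ := δ / (2 * C * K)) (by positivity)
    obtain ⟨Λ', y, hyY, hyE, hsub, hdet⟩ := exists_ellipsoid_insert_subset hab hs hY Λ v hK.1
    refine ⟨Λ', v, ?_, ?_⟩
    · have h1 : C * (K * |LinearMap.det (Λ : 𝔼 →ₗ[ℝ] 𝔼)|) < δ / 2 := by
        rw [lt_div_iff₀ (by positivity)] at hΛ
        linarith
      have h2 : C * (s / K) < δ / 2 := by
        rw [mul_div_assoc', div_lt_div_iff₀ hK0 two_pos]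
        linarith
      rw [hdet]
      change C * _ < δ
      linarith
    · calc ((n + 1 : ℕ) : ℕ∞) ≤ (insert y (ellipsoid Λ v ∩ Y)).encard := by
            rw [encard_insert_of_notMem fun h => hyE h.1]
            push_cast
            exact add_le_add_left hn 1
        _ ≤ (ellipsoid Λ' v ∩ Y).encard := by
            refine encard_le_encard fun z hz => ?_
            rcases hz with rfl | hz
            · exact ⟨hsub (mem_insert z _), hyY⟩
            · exact ⟨hsub (mem_insert_of_mem y hz.1), hz.2⟩

end Danzer

/-- If `Y ⊆ ℝ^d` is a Danzer set, then for every `n` and `ε > 0` there is an ellipsoid of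
volume less than `ε` containing at least `n` points of `Y`. -/
theorem no_gowers_danzer_set {d : ℕ} (hd : 2 ≤ d) (Y : Set (EuclideanSpace ℝ (Fin d)))
    (hDanzer : ∃ s : ℝ, 0 < s ∧ ∀ K : Set (EuclideanSpace ℝ (Fin d)), IsClosed K →
      Convex ℝ K → volume K = ENNReal.ofReal s → (K ∩ Y).Nonempty)
    (n : ℕ) (ε : ℝ) (hε : 0 < ε) :
    ∃ E : Set (EuclideanSpace ℝ (Fin d)), IsEllipsoid E ∧
      volume E < ENNReal.ofReal ε ∧ (n : ℕ∞) ≤ (E ∩ Y).encard := by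
  obtain ⟨s, hs, hY⟩ := hDanzer
  have hab : (⟨0, by omega⟩ : Fin d) ≠ ⟨1, by omega⟩ := by simp
  have hB : volume (closedBall (0 : EuclideanSpace ℝ (Fin d)) 1) ≠ ⊤ :=
    measure_closedBall_lt_top.ne
  have hω : 0 < (volume (closedBall (0 : EuclideanSpace ℝ (Fin d)) 1)).toReal :=
    ENNReal.toReal_pos (measure_closedBall_pos _ _ one_pos).ne' hB
  obtain ⟨Λ, v, hΛ, hn⟩ :=
    Danzer.exists_ellipsoid_abs_det_lt_le_encard hab hs hY n (div_pos hε hω)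
  refine ⟨ellipsoid Λ v, ⟨Λ, v, rfl⟩, ?_, hn⟩
  rw [ellipsoid, volume.addHaar_image_linearEquiv_add, ← ENNReal.ofReal_toReal hB,
    ← ENNReal.ofReal_mul (abs_nonneg _), ENNReal.ofReal_lt_ofReal_iff hε]
  exact (lt_div_iff₀ hω).mp hΛ
end
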